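/- arXiv:0802.1956 — 2 statements merged into one kernel-verified Lean document; each statement's English description precedes it below -/
import Mathlib

section
/- Let L' be a non-degenerate even lattice and let L = L'(3) denote the same Z-module with bilinear form multiplied by 3, and assume L is not unimodular. Then L admits no isometry f of order 3 that acts trivially on the discriminant group A_L = L*/L, where L* = Hom(L, Z) is embedded via the bilinear form. -/
/-!
Since `L* ⊇ (1/3) L`, an isometry acting trivially on `L*/L` moves every vector by an element
of `3L`, so `f = 1 + 3h`. Expanding `f³ = 1` and cancelling `9` gives `h = 3 (-(h + h²)) h`;
iterating, `h` takes values in `⋂ₙ 3ⁿ L = 0` (Krull), hence `f = 1`.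
-/

theorem LinearMap.SeparatingLeft.exists_sub_eq_smul {R M : Type*} [CommRing R] [AddCommGroup M]
    [Module R M] {B : M →ₗ[R] M →ₗ[R] R} (hB : B.SeparatingLeft) {f : Module.End R M}
    (hf : ∀ x y, B (f x) (f y) = B x y) {p : R}
    (htriv : ∀ φ : M →ₗ[R] R, ∃ l : M, φ ∘ₗ f = φ + p • B l) (x : M) :
    ∃ y, f x - x = p • y := by
  obtain ⟨l, hl⟩ := htriv (B (f x))
  refine ⟨-l, eq_of_sub_eq_zero (hB _ fun y ↦ ?_)⟩
  have hy := congr($hl y)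
  simp only [LinearMap.comp_apply, hf, LinearMap.add_apply, LinearMap.smul_apply,
    smul_eq_mul] at hy
  simp only [map_sub, map_smul, map_neg, LinearMap.sub_apply, LinearMap.smul_apply,
    LinearMap.neg_apply, smul_eq_mul]
  linear_combination -hy

theorem eq_zero_of_forall_exists_eq_pow_smul {R M : Type*} [CommRing R] [IsDomain R]
    [IsNoetherianRing R] [AddCommGroup M] [Module R M] [Module.IsTorsionFree R M]
    [Module.Finite R M] {p : R} (hp : ¬IsUnit p) {x : M} (hx : ∀ n : ℕ, ∃ y, x = p ^ n • y) :
    x = 0 := by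
  have hI : Ideal.span {p} ≠ ⊤ := by rwa [Ne, Ideal.span_singleton_eq_top]
  rw [← Submodule.mem_bot R, ← (Ideal.span {p}).iInf_pow_smul_eq_bot_of_isTorsionFree hI,
    Submodule.mem_iInf]
  intro n
  obtain ⟨y, rfl⟩ := hx n
  rw [Ideal.span_singleton_pow, Submodule.ideal_span_singleton_smul]
  exact Submodule.smul_mem_pointwise_smul y _ ⊤ Submodule.mem_top

namespace Module.End

variable {R M : Type*} [CommRing R] [AddCommGroup M] [Module R M]

theorem eq_pow_smul_pow_mul_of_eq_smul_mul {p : R} {h k : End R M} (hk : h = p • (k * h))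
    (n : ℕ) : h = p ^ n • (k ^ n * h) := by
  induction n with
  | zero => simp
  | succ n ih =>
    calc h = p • (k * (p ^ n • (k ^ n * h))) := by rw [← ih, ← hk]
      _ = p ^ (n + 1) • (k ^ (n + 1) * h) := by
        rw [mul_smul_comm, smul_smul, ← mul_assoc, ← pow_succ', ← pow_succ']

theorem eq_zero_of_eq_smul_mul [IsDomain R] [IsNoetherianRing R] [Module.IsTorsionFree R M]
    [Module.Finite R M] {p : R} (hp : ¬IsUnit p) {h k : End R M} (hk : h = p • (k * h)) :
    h = 0 := by
  ext x
  refine eq_zero_of_forall_exists_eq_pow_smul hp fun n ↦ ⟨(k ^ n * h) x, ?_⟩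
  exact LinearMap.congr_fun (eq_pow_smul_pow_mul_of_eq_smul_mul hk n) x

theorem exists_eq_smul_of_forall_exists_eq_smul [IsDomain R] [Module.IsTorsionFree R M]
    {p : R} (hp : p ≠ 0) {g : End R M} (hg : ∀ x, ∃ y, g x = p • y) :
    ∃ h : End R M, g = p • h := by
  let i : End R M := p • LinearMap.id
  have hi : Function.Injective i := smul_right_injective M hp
  refine ⟨LinearMap.codRestrictOfInjective g i hi fun x ↦ ?_, ?_⟩
  · obtain ⟨y, hy⟩ := hg x
    exact ⟨y, hy.symm⟩
  · ext x
    exact (LinearMap.codRestrictOfInjective_comp_apply g i hi _ x).symm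

theorem eq_one_of_pow_three_eq_one [IsDomain R] [IsNoetherianRing R] [Module.IsTorsionFree R M]
    [Module.Finite R M] (h3 : ¬IsUnit (3 : R)) {f h : End R M} (hf : f ^ 3 = 1)
    (hfh : f - 1 = (3 : R) • h) : f = 1 := by
  rcases eq_or_ne (3 : R) 0 with h3zero | h3zero
  · rwa [h3zero, zero_smul, sub_eq_zero] at hfh
  rw [sub_eq_iff_eq_add', ofNat_smul_eq_nsmul] at hfh
  have hcube : (1 + 3 • h) ^ 3 = 1 + 9 • (h + 3 • (h ^ 2 + h ^ 3)) := by
    noncomm_ring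
  rw [hfh, hcube, add_eq_left, ← ofNat_smul_eq_nsmul (R := R)] at hf
  have hrel : h + 3 • (h ^ 2 + h ^ 3) = 0 := by
    ext x
    have h9 : (9 : R) ≠ 0 := by
      rw [show (9 : R) = 3 * 3 by norm_num]
      exact mul_self_ne_zero.mpr h3zero
    refine smul_right_injective M h9 ?_
    simpa only [LinearMap.smul_apply, LinearMap.zero_apply, smul_zero] using congr($hf x)
  have h0 : h = 0 := by
    refine eq_zero_of_eq_smul_mul h3 (k := -(h + h ^ 2)) ?_
    rw [ofNat_smul_eq_nsmul]
    calc h = -(3 • (h ^ 2 + h ^ 3)) := eq_neg_of_add_eq_zero_left hrel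
      _ = 3 • (-(h + h ^ 2) * h) := by noncomm_ring
  rw [hfh, h0, smul_zero, add_zero]

end Module.End

theorem stmt2_general {L : Type*} [AddCommGroup L] [Module ℤ L] [Module.Free ℤ L]
    [Module.Finite ℤ L]
    (B : L →ₗ[ℤ] L →ₗ[ℤ] ℤ)
    (hnondeg : ∀ x, (∀ y, B x y = 0) → x = 0) :
    ¬ ∃ f : Module.End ℤ L,
        (∀ x y, B (f x) (f y) = B x y) ∧ f ^ 3 = 1 ∧ f ≠ 1 ∧
        (∀ φ : L →ₗ[ℤ] ℤ, ∃ l : L, φ ∘ₗ (f : L →ₗ[ℤ] L) = φ + (3 : ℤ) • B l) := by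
  rintro ⟨f, hiso, hcube, hne, htriv⟩
  obtain ⟨h, hfh⟩ := Module.End.exists_eq_smul_of_forall_exists_eq_smul three_ne_zero
    (g := f - 1) fun x ↦ by
      simpa using LinearMap.SeparatingLeft.exists_sub_eq_smul hnondeg hiso htriv x
  exact hne (Module.End.eq_one_of_pow_three_eq_one (by decide) hcube hfh)

/-- Let `L'` be a non-degenerate even lattice with form `B`, and let
`L = L'(3)` be the same module with form `3B`, assumed not unimodular (the map
`l ↦ 3 • B l` into `Hom(L, ℤ)` is not surjective).  Then `L` admits no isometry of
order 3 acting trivially on the discriminant group `A_L = L*/L`. -/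
theorem stmt2 {L : Type*} [AddCommGroup L] [Module ℤ L] [Module.Free ℤ L]
    [Module.Finite ℤ L]
    (B : L →ₗ[ℤ] L →ₗ[ℤ] ℤ)
    (hsymm : ∀ x y, B x y = B y x)
    (hnondeg : ∀ x, (∀ y, B x y = 0) → x = 0)
    (heven : ∀ x, Even (B x x))
    (hnotunimodular : ¬ ∀ φ : L →ₗ[ℤ] ℤ, ∃ l : L, φ = (3 : ℤ) • B l) :
    ¬ ∃ f : Module.End ℤ L,
        (∀ x y, B (f x) (f y) = B x y) ∧ f ^ 3 = 1 ∧ f ≠ 1 ∧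
        (∀ φ : L →ₗ[ℤ] ℤ, ∃ l : L, φ ∘ₗ (f : L →ₗ[ℤ] L) = φ + (3 : ℤ) • B l) :=
  stmt2_general B hnondeg
end

section
/- Let U(3) have basis e1, e2 with e1² = e2² = 0, ⟨e1,e2⟩ = 3, and U have basis e1', e2' with (e1')² = (e2')² = 0, ⟨e1',e2'⟩ = 1, and form the orthogonal direct sum U(3) ⊕ U. Then the linear map ρ defined by ρ(e1) = -2e1 + 3e1', ρ(e2) = e2 + 3e2', ρ(e1') = -e1 + e1', ρ(e2') = -e2 - 2e2' is an isometry of U(3) ⊕ U of order exactly 3 that acts trivially on the discriminant group. -/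
/-!
A vector `x` lies in the dual lattice exactly when `G x` is integral. If `M - 1 = N G` for an
integral matrix `N`, then `(M - 1) x = N (G x)` is integral for every such `x`, i.e. `M` acts
trivially on the discriminant group. For `ρ` the matrix `N = (ρ - 1) G⁻¹` is integral: the
factors `1/3` of `G⁻¹` on the `U(3)` block are cancelled because the `e₁`-, `e₂`-columns of
`ρ - 1` are divisible by `3`. The isometry and order conditions are finite integer computations.
-/

open Matrix

theorem mulVec_sub_self_integral_of_sub_one_eq_mul {n : Type*} [Fintype n] [DecidableEq n]
    {G M : Matrix n n ℤ} (N : Matrix n n ℤ) (hMN : M - 1 = N * G) (x : n → ℚ)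
    (hx : ∀ i, ∃ m : ℤ, (G.map (Int.cast : ℤ → ℚ)).mulVec x i = m) :
    ∀ i, ∃ m : ℤ, ((M.map (Int.cast : ℤ → ℚ)).mulVec x - x) i = m := by
  choose y hy using hx
  have hGx : G.map (Int.cast : ℤ → ℚ) *ᵥ x = Int.cast ∘ y := funext hy
  have hcast : (M - 1).map (Int.cast : ℤ → ℚ) = N.map Int.cast * G.map Int.cast := by
    rw [hMN]
    exact Matrix.map_mul (f := Int.castRingHom ℚ)
  have hMx : (M.map (Int.cast : ℤ → ℚ)).mulVec x - x
      = (N.map (Int.cast : ℤ → ℚ)).mulVec (G.map (Int.cast : ℤ → ℚ) *ᵥ x) := by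
    rw [mulVec_mulVec, ← hcast, Matrix.map_sub _ Int.cast_sub,
      Matrix.map_one _ Int.cast_zero Int.cast_one, sub_mulVec, one_mulVec]
  intro i
  refine ⟨(N *ᵥ y) i, ?_⟩
  rw [hMx, hGx]
  exact (RingHom.map_mulVec (Int.castRingHom ℚ) N y i).symm

/-- The explicit linear map `ρ₁` on `U(3) ⊕ U` (with Gram matrix
`[[0,3],[3,0]] ⊕ [[0,1],[1,0]]`) given by `ρ(e₁) = -2e₁ + 3e₁'`, `ρ(e₂) = e₂ + 3e₂'`,
`ρ(e₁') = -e₁ + e₁'`, `ρ(e₂') = -e₂ - 2e₂'` is an isometry of order exactly 3 acting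
trivially on the discriminant group. -/
theorem stmt4 :
    ∀ (G M : Matrix (Fin 4) (Fin 4) ℤ),
      G = !![0, 3, 0, 0; 3, 0, 0, 0; 0, 0, 0, 1; 0, 0, 1, 0] →
      M = !![-2, 0, -1, 0; 0, 1, 0, -1; 3, 0, 1, 0; 0, 3, 0, -2] →
      M.transpose * G * M = G ∧ M ^ 3 = 1 ∧ M ≠ 1 ∧
        (∀ x : Fin 4 → ℚ,
          (∀ i, ∃ m : ℤ, (G.map (Int.cast : ℤ → ℚ)).mulVec x i = m) →
          (∀ i, ∃ m : ℤ, ((M.map (Int.cast : ℤ → ℚ)).mulVec x - x) i = m)) := by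
  rintro G M rfl rfl
  refine ⟨by decide, by decide, by decide, ?_⟩
  exact mulVec_sub_self_integral_of_sub_one_eq_mul
    !![0, -1, 0, -1; 0, 0, -1, 0; 0, 1, 0, 0; 1, 0, -3, 0] (by decide)
end
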